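/- arXiv:0903.1625 — 2 statements merged into one kernel-verified Lean document; each statement's English description precedes it below -/
import Mathlib

section
/- With B_n and C_n as in the paper (B_1 = C_1 = 1, B_0 the empty matrix), for all n ≥ 0 one has det(B_{n+1}·C_{n+1}) = det(B_n). -/
/-!
Both `B_m` and `C_{n+1}` are lower triangular. The diagonal of `B_m` is `(1, -1, …, -1)`, so
`det B_m = (-1)^(m-1)`, and the diagonal of `C_{n+1}` is `(1, …, 1, ±1)`, with last entry `-1`
exactly when `n ≠ 0`. The two signs combine to `det B_n`.
-/

open Matrix

section

variable {R : Type*} [CommRing R]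

/-- The paper's `B_m`. -/
def matrixB (f : R) (m : ℕ) : Matrix (Fin m) (Fin m) R :=
  of fun i j =>
    if (i : ℕ) = 0 ∧ (j : ℕ) = 0 then 1
    else if (i : ℕ) = (j : ℕ) + 1 then f
    else if i = j then -1 else 0

/-- The paper's `C_{n+1}`. -/
def matrixC (f : R) (n : ℕ) : Matrix (Fin (n + 1)) (Fin (n + 1)) R :=
  of fun i j =>
    if (i : ℕ) = n then (if (j : ℕ) = 0 then f ^ n else -(f ^ (n - (j : ℕ))))
    else if i = j then 1 else 0

theorem matrixB_isLowerTriangular (f : R) (m : ℕ) : (matrixB f m).IsLowerTriangular := by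
  intro i j (hij : (i : ℕ) < j)
  simp only [matrixB, of_apply]
  rw [if_neg (by omega), if_neg (by omega), if_neg (by omega)]

theorem matrixC_isLowerTriangular (f : R) (n : ℕ) : (matrixC f n).IsLowerTriangular := by
  intro i j (hij : (i : ℕ) < j)
  simp only [matrixC, of_apply]
  rw [if_neg (by omega), if_neg (by omega)]

-- For `m = 0` the truncated exponent `0 - 1 = 0` gives the empty determinant `1`.
theorem det_matrixB (f : R) (m : ℕ) : (matrixB f m).det = (-1) ^ (m - 1) := by
  rw [det_of_isLowerTriangular _ (matrixB_isLowerTriangular f m)]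
  cases m with
  | zero => simp
  | succ k => simp [Fin.prod_univ_succ, matrixB]

theorem det_matrixC (f : R) (n : ℕ) : (matrixC f n).det = if n = 0 then 1 else -1 := by
  rw [det_of_isLowerTriangular _ (matrixC_isLowerTriangular f n), Fin.prod_univ_castSucc]
  split_ifs with hn
  · subst hn
    simp [matrixC]
  · simp [matrixC, hn, fun i : Fin n => (Fin.is_lt i).ne]

end

theorem det_BC_eq_det_B_general {F : Type*} [Field F] (f : F) (n : ℕ)
    (B : ∀ m : ℕ, Matrix (Fin m) (Fin m) F)
    (hB : ∀ m : ℕ, B m = Matrix.of fun i j : Fin m =>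
      if (i : ℕ) = 0 ∧ (j : ℕ) = 0 then (1 : F)
      else if (i : ℕ) = (j : ℕ) + 1 then f
      else if i = j then -1 else 0)
    (C : Matrix (Fin (n + 1)) (Fin (n + 1)) F)
    (hC : C = Matrix.of fun i j : Fin (n + 1) =>
      if (i : ℕ) = n then (if (j : ℕ) = 0 then f ^ n else -(f ^ (n - (j : ℕ))))
      else if i = j then (1 : F) else 0) :
    (B (n + 1) * C).det = (B n).det := by
  have hB' : ∀ m, B m = matrixB f m := hB
  have hC' : C = matrixC f n := hC
  rw [det_mul, hB', hB', hC', det_matrixB, det_matrixB, det_matrixC]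
  cases n with
  | zero => simp
  | succ k => simp [pow_succ]

/-- With `B_n` and `C_n` as in the paper (`B_1 = C_1 = 1`, `B_0` the empty
matrix), for all `n ≥ 0` one has `det(B_{n+1}·C_{n+1}) = det(B_n)`.  Here `f`
is a nonzero non-unit of the ring of integers `O` of the nonarchimedean local
field `F`, and determinants are taken in `F`. -/
theorem det_BC_eq_det_B {F : Type*} [Field F] (O : Subring F) (f : F)
    (hfO : f ∈ O) (hf0 : f ≠ 0) (hfnu : ¬ IsUnit (⟨f, hfO⟩ : O)) (n : ℕ)
    (B : ∀ m : ℕ, Matrix (Fin m) (Fin m) F)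
    (hB : ∀ m : ℕ, B m = Matrix.of fun i j : Fin m =>
      if (i : ℕ) = 0 ∧ (j : ℕ) = 0 then (1 : F)
      else if (i : ℕ) = (j : ℕ) + 1 then f
      else if i = j then -1 else 0)
    (C : Matrix (Fin (n + 1)) (Fin (n + 1)) F)
    (hC : C = Matrix.of fun i j : Fin (n + 1) =>
      if (i : ℕ) = n then (if (j : ℕ) = 0 then f ^ n else -(f ^ (n - (j : ℕ))))
      else if i = j then (1 : F) else 0) :
    (B (n + 1) * C).det = (B n).det :=
  det_BC_eq_det_B_general f n B hB C hC
end

section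
/- Let F be a nonarchimedean local field, n ≥ 1, f a nonzero non-unit of O_F, and set t := diag(f^n, f^{n−1}, …, f, 1) ∈ GL_{n+1}(F). Define h ∈ GL_{n+1}(ℤ) to be the matrix whose top-left n×n block is the antidiagonal permutation matrix w_n, whose last column is all 1's, and whose last row is (0,…,0,1); define h^{(f)} := t^{−1}·h·t. Then B_{n+1}·h^{(f)}·E_{n+1} = D_{n+1} := diag(f^{−n}, f^{−(n−2)}, …, f^{n−2}, f^{n}), where B_{n+1} and E_{n+1} are the explicit matrices of the paper. -/
set_option maxHeartbeats 1000000 in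
private lemma mulBG_aux {F : Type*} [Field F] (n : ℕ) (hn : 1 ≤ n) (f : F) :
    ((Matrix.of fun i j : Fin (n + 1) =>
      if (i : ℕ) = 0 ∧ (j : ℕ) = 0 then (1 : F)
      else if (i : ℕ) = (j : ℕ) + 1 then f
      else if i = j then -1 else 0) *
     (Matrix.of fun k l : Fin (n + 1) =>
      if (l : ℕ) = n then f ^ (k : ℕ)
      else if (k : ℕ) < n ∧ (k : ℕ) + (l : ℕ) = n - 1 then f ^ (2 * (k : ℕ) + 1)
      else (0 : F))) =
    (Matrix.of fun i l : Fin (n + 1) =>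
      if (i : ℕ) = 0 then
        (if (l : ℕ) = n then (1 : F) else if (l : ℕ) = n - 1 then f else 0)
      else
        (if (i : ℕ) + (l : ℕ) = n then f ^ (2 * (i : ℕ))
         else if (i : ℕ) < n ∧ (i : ℕ) + (l : ℕ) = n - 1 then -f ^ (2 * (i : ℕ) + 1)
         else 0)) := by
  ext i l
  rw [Matrix.mul_apply]
  simp only [Matrix.of_apply]
  have hl := l.isLt
  by_cases hi0 : (i : ℕ) = 0
  · have hstep : ∀ k : Fin (n + 1), k ∈ Finset.univ →
        ((if (i : ℕ) = 0 ∧ (k : ℕ) = 0 then (1 : F)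
        else if (i : ℕ) = (k : ℕ) + 1 then f else if i = k then -1 else 0) *
        (if (l : ℕ) = n then f ^ (k : ℕ)
          else if (k : ℕ) < n ∧ (k : ℕ) + (l : ℕ) = n - 1 then f ^ (2 * (k : ℕ) + 1)
          else (0 : F))) =
        if k = (⟨0, by omega⟩ : Fin (n + 1)) then
          (if (l : ℕ) = n then f ^ (k : ℕ)
            else if (k : ℕ) < n ∧ (k : ℕ) + (l : ℕ) = n - 1 then f ^ (2 * (k : ℕ) + 1)
            else (0 : F)) else 0 := by
      intro k _
      have hk := k.isLt
      simp only [Fin.ext_iff, Fin.val_mk]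
      split_ifs <;> first | ring1 | (exfalso; first | omega | assumption)
    rw [Finset.sum_congr rfl hstep, Finset.sum_ite_eq']
    simp only [Finset.mem_univ, if_true, Fin.val_mk, hi0]
    split_ifs <;> first | ring1 | (exfalso; first | omega | assumption)
  · obtain ⟨m, hm⟩ : ∃ m, (i : ℕ) = m + 1 := ⟨(i : ℕ) - 1, by omega⟩
    have him := i.isLt
    have hmn : m < n := by omega
    have hstep : ∀ k : Fin (n + 1), k ∈ Finset.univ →
        ((if (i : ℕ) = 0 ∧ (k : ℕ) = 0 then (1 : F)
        else if (i : ℕ) = (k : ℕ) + 1 then f else if i = k then -1 else 0) *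
        (if (l : ℕ) = n then f ^ (k : ℕ)
          else if (k : ℕ) < n ∧ (k : ℕ) + (l : ℕ) = n - 1 then f ^ (2 * (k : ℕ) + 1)
          else (0 : F))) =
        (if k = (⟨m, by omega⟩ : Fin (n + 1)) then
          f * (if (l : ℕ) = n then f ^ (k : ℕ)
            else if (k : ℕ) < n ∧ (k : ℕ) + (l : ℕ) = n - 1 then f ^ (2 * (k : ℕ) + 1)
            else (0 : F)) else 0) +
        (if k = i then
          -(if (l : ℕ) = n then f ^ (k : ℕ)
            else if (k : ℕ) < n ∧ (k : ℕ) + (l : ℕ) = n - 1 then f ^ (2 * (k : ℕ) + 1)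
            else (0 : F)) else 0) := by
      intro k _
      have hk := k.isLt
      simp only [Fin.ext_iff, Fin.val_mk]
      split_ifs <;> first | ring1 | (exfalso; first | omega | assumption)
    rw [Finset.sum_congr rfl hstep, Finset.sum_add_distrib, Finset.sum_ite_eq',
      Finset.sum_ite_eq']
    simp only [Finset.mem_univ, if_true, Fin.val_mk, hm]
    split_ifs <;> first | ring1 | (exfalso; first | omega | assumption)

set_option maxHeartbeats 1000000 in
private lemma mulAE_aux {F : Type*} [Field F] (n : ℕ) (hn : 1 ≤ n) (f : F) :
    ((Matrix.of fun i l : Fin (n + 1) =>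
      if (i : ℕ) = 0 then
        (if (l : ℕ) = n then (1 : F) else if (l : ℕ) = n - 1 then f else 0)
      else
        (if (i : ℕ) + (l : ℕ) = n then f ^ (2 * (i : ℕ))
         else if (i : ℕ) < n ∧ (i : ℕ) + (l : ℕ) = n - 1 then -f ^ (2 * (i : ℕ) + 1)
         else 0)) *
     (Matrix.of fun i j : Fin (n + 1) =>
      if (i : ℕ) < n then
        (if n ≤ (i : ℕ) + (j : ℕ) then f ^ ((i : ℕ) + (j : ℕ) - n) else 0)
      else (if (j : ℕ) = 0 then 1 else -(f ^ (j : ℕ))))) =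
    Matrix.diagonal (fun k : Fin (n + 1) => f ^ (2 * (k : ℕ))) := by
  ext i j
  rw [Matrix.mul_apply, Matrix.diagonal_apply]
  simp only [Matrix.of_apply]
  have hj := j.isLt
  by_cases hi0 : (i : ℕ) = 0
  · have hstep : ∀ l : Fin (n + 1), l ∈ Finset.univ →
        ((if (i : ℕ) = 0 then
        (if (l : ℕ) = n then (1 : F) else if (l : ℕ) = n - 1 then f else 0)
        else
        (if (i : ℕ) + (l : ℕ) = n then f ^ (2 * (i : ℕ))
         else if (i : ℕ) < n ∧ (i : ℕ) + (l : ℕ) = n - 1 then -f ^ (2 * (i : ℕ) + 1)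
         else 0)) *
        (if (l : ℕ) < n then
          (if n ≤ (l : ℕ) + (j : ℕ) then f ^ ((l : ℕ) + (j : ℕ) - n) else 0)
          else (if (j : ℕ) = 0 then 1 else -(f ^ (j : ℕ))))) =
        (if l = (⟨n, by omega⟩ : Fin (n + 1)) then
          (if (l : ℕ) < n then
            (if n ≤ (l : ℕ) + (j : ℕ) then f ^ ((l : ℕ) + (j : ℕ) - n) else 0)
            else (if (j : ℕ) = 0 then 1 else -(f ^ (j : ℕ)))) else 0) +
        (if l = (⟨n - 1, by omega⟩ : Fin (n + 1)) then
          f * (if (l : ℕ) < n then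
            (if n ≤ (l : ℕ) + (j : ℕ) then f ^ ((l : ℕ) + (j : ℕ) - n) else 0)
            else (if (j : ℕ) = 0 then 1 else -(f ^ (j : ℕ)))) else 0) := by
      intro l _
      have hl := l.isLt
      simp only [Fin.ext_iff, Fin.val_mk]
      split_ifs <;> first | ring1 | (exfalso; first | omega | assumption)
    rw [Finset.sum_congr rfl hstep, Finset.sum_add_distrib, Finset.sum_ite_eq',
      Finset.sum_ite_eq']
    simp only [Finset.mem_univ, if_true, Fin.val_mk, Fin.ext_iff, hi0]
    split_ifs <;>
      first
      | ring1
      | (exfalso; first | omega | assumption)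
      | (rw [show n - 1 + (j : ℕ) - n = (j : ℕ) - 1 from by omega, ← pow_succ',
          show (j : ℕ) - 1 + 1 = (j : ℕ) from by omega]; ring1)
  · obtain ⟨m, hm⟩ : ∃ m, (i : ℕ) = m + 1 := ⟨(i : ℕ) - 1, by omega⟩
    have him := i.isLt
    by_cases hmn : m + 1 = n
    · have hstep : ∀ l : Fin (n + 1), l ∈ Finset.univ →
          ((if (i : ℕ) = 0 then
          (if (l : ℕ) = n then (1 : F) else if (l : ℕ) = n - 1 then f else 0)
          else
          (if (i : ℕ) + (l : ℕ) = n then f ^ (2 * (i : ℕ))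
           else if (i : ℕ) < n ∧ (i : ℕ) + (l : ℕ) = n - 1 then -f ^ (2 * (i : ℕ) + 1)
           else 0)) *
          (if (l : ℕ) < n then
            (if n ≤ (l : ℕ) + (j : ℕ) then f ^ ((l : ℕ) + (j : ℕ) - n) else 0)
            else (if (j : ℕ) = 0 then 1 else -(f ^ (j : ℕ))))) =
          (if l = (⟨0, by omega⟩ : Fin (n + 1)) then
            f ^ (2 * (i : ℕ)) *
            (if (l : ℕ) < n then
              (if n ≤ (l : ℕ) + (j : ℕ) then f ^ ((l : ℕ) + (j : ℕ) - n) else 0)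
              else (if (j : ℕ) = 0 then 1 else -(f ^ (j : ℕ)))) else 0) := by
        intro l _
        have hl := l.isLt
        simp only [Fin.ext_iff, Fin.val_mk]
        split_ifs <;> first | ring1 | (exfalso; first | omega | assumption)
      rw [Finset.sum_congr rfl hstep, Finset.sum_ite_eq']
      simp only [Finset.mem_univ, if_true, Fin.val_mk, Fin.ext_iff, hm]
      split_ifs <;>
        first
        | ring1
        | (exfalso; first | omega | assumption)
        | (rw [show 0 + (j : ℕ) - n = 0 from by omega]; ring1)
    · have hstep : ∀ l : Fin (n + 1), l ∈ Finset.univ →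
          ((if (i : ℕ) = 0 then
          (if (l : ℕ) = n then (1 : F) else if (l : ℕ) = n - 1 then f else 0)
          else
          (if (i : ℕ) + (l : ℕ) = n then f ^ (2 * (i : ℕ))
           else if (i : ℕ) < n ∧ (i : ℕ) + (l : ℕ) = n - 1 then -f ^ (2 * (i : ℕ) + 1)
           else 0)) *
          (if (l : ℕ) < n then
            (if n ≤ (l : ℕ) + (j : ℕ) then f ^ ((l : ℕ) + (j : ℕ) - n) else 0)
            else (if (j : ℕ) = 0 then 1 else -(f ^ (j : ℕ))))) =
          (if l = (⟨n - m - 1, by omega⟩ : Fin (n + 1)) then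
            f ^ (2 * (i : ℕ)) *
            (if (l : ℕ) < n then
              (if n ≤ (l : ℕ) + (j : ℕ) then f ^ ((l : ℕ) + (j : ℕ) - n) else 0)
              else (if (j : ℕ) = 0 then 1 else -(f ^ (j : ℕ)))) else 0) +
          (if l = (⟨n - m - 2, by omega⟩ : Fin (n + 1)) then
            (-f ^ (2 * (i : ℕ) + 1)) *
            (if (l : ℕ) < n then
              (if n ≤ (l : ℕ) + (j : ℕ) then f ^ ((l : ℕ) + (j : ℕ) - n) else 0)
              else (if (j : ℕ) = 0 then 1 else -(f ^ (j : ℕ)))) else 0) := by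
        intro l _
        have hl := l.isLt
        simp only [Fin.ext_iff, Fin.val_mk]
        split_ifs <;> first | ring1 | (exfalso; first | omega | assumption)
      rw [Finset.sum_congr rfl hstep, Finset.sum_add_distrib, Finset.sum_ite_eq',
        Finset.sum_ite_eq']
      simp only [Finset.mem_univ, if_true, Fin.val_mk, Fin.ext_iff, hm]
      split_ifs <;>
        first
        | ring1
        | (exfalso; first | omega | assumption)
        | (rw [show n - m - 1 + (j : ℕ) - n = 0 from by omega]; ring1)
        | (rw [← pow_add, neg_mul, ← pow_add,
            show 2 * (m + 1) + (n - m - 1 + (j : ℕ) - n)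
              = 2 * (m + 1) + 1 + (n - m - 2 + (j : ℕ) - n) from by omega]; ring1)

/-- The matrix identity `B_{n+1}·h^{(f)}·E_{n+1} = D_{n+1}` in `GL_{n+1}(F)`,
where `h` has top-left `n×n` block the antidiagonal permutation matrix `w_n`,
last column all `1`'s and last row `(0,…,0,1)`, `h^{(f)} = t⁻¹·h·t` with
`t = diag(f^n, …, f, 1)`, `D_{n+1} = diag(f^{−n}, f^{−(n−2)}, …, f^{n−2}, f^n)`,
and `B_{n+1}`, `E_{n+1}` are the explicit matrices of the paper. -/
theorem B_hf_E_eq_D {F : Type*} [Field F] (O : Subring F) (n : ℕ) (hn : 1 ≤ n)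
    (f : F) (hfO : f ∈ O) (hf0 : f ≠ 0) (hfnu : ¬ IsUnit (⟨f, hfO⟩ : O))
    (B : Matrix (Fin (n + 1)) (Fin (n + 1)) F)
    (hB : B = Matrix.of fun i j : Fin (n + 1) =>
      if (i : ℕ) = 0 ∧ (j : ℕ) = 0 then (1 : F)
      else if (i : ℕ) = (j : ℕ) + 1 then f
      else if i = j then -1 else 0)
    (t : Matrix (Fin (n + 1)) (Fin (n + 1)) F)
    (ht : t = Matrix.diagonal fun k : Fin (n + 1) => f ^ (n - (k : ℕ)))
    (h : Matrix (Fin (n + 1)) (Fin (n + 1)) F)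
    (hh : h = Matrix.of fun i j : Fin (n + 1) =>
      if (j : ℕ) = n then (1 : F)
      else if (i : ℕ) < n ∧ (i : ℕ) + (j : ℕ) = n - 1 then 1
      else 0)
    (E : Matrix (Fin (n + 1)) (Fin (n + 1)) F)
    (hE : E = Matrix.of fun i j : Fin (n + 1) =>
      if (i : ℕ) < n then
        (if n ≤ (i : ℕ) + (j : ℕ) then f ^ ((i : ℕ) + (j : ℕ) - n) else 0)
      else (if (j : ℕ) = 0 then 1 else -(f ^ (j : ℕ))))
    (D : Matrix (Fin (n + 1)) (Fin (n + 1)) F)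
    (hD : D = Matrix.diagonal fun k : Fin (n + 1) =>
      f ^ ((2 * (k : ℕ) : ℤ) - (n : ℤ))) :
    B * (t⁻¹ * h * t) * E = D := by
  have hfn : (f ^ n : F) ≠ 0 := pow_ne_zero n hf0
  have hti : t⁻¹ = (f ^ n)⁻¹ • Matrix.diagonal (fun k : Fin (n + 1) => f ^ (k : ℕ)) := by
    apply Matrix.inv_eq_right_inv
    rw [ht, Matrix.mul_smul, Matrix.diagonal_mul_diagonal]
    have h1 : (fun k : Fin (n + 1) => f ^ (n - (k : ℕ)) * f ^ (k : ℕ))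
        = fun _ => f ^ n := by
      funext k
      rw [← pow_add]
      congr 1
      have := k.isLt
      omega
    rw [h1]
    ext a b
    by_cases hab : a = b
    · simp [Matrix.diagonal_apply, hab, Matrix.one_apply, inv_mul_cancel₀ hfn]
    · simp [Matrix.diagonal_apply, hab, Matrix.one_apply]
  have hG : Matrix.diagonal (fun k : Fin (n + 1) => f ^ (k : ℕ)) * h *
      Matrix.diagonal (fun k : Fin (n + 1) => f ^ (n - (k : ℕ))) =
      (Matrix.of fun k l : Fin (n + 1) =>
        if (l : ℕ) = n then f ^ (k : ℕ)
        else if (k : ℕ) < n ∧ (k : ℕ) + (l : ℕ) = n - 1 then f ^ (2 * (k : ℕ) + 1)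
        else (0 : F)) := by
    ext k l
    rw [hh]
    simp only [Matrix.mul_diagonal, Matrix.diagonal_mul, Matrix.of_apply]
    have hl := l.isLt
    split_ifs with h1 h2
    · rw [h1, Nat.sub_self, pow_zero]; ring
    · have he : n - (l : ℕ) = (k : ℕ) + 1 := by omega
      rw [he, mul_one, ← pow_add]
      congr 1
      omega
    · ring
  have hconj : t⁻¹ * h * t = (f ^ n)⁻¹ •
      (Matrix.of fun k l : Fin (n + 1) =>
        if (l : ℕ) = n then f ^ (k : ℕ)
        else if (k : ℕ) < n ∧ (k : ℕ) + (l : ℕ) = n - 1 then f ^ (2 * (k : ℕ) + 1)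
        else (0 : F)) := by
    rw [hti, ht, Matrix.smul_mul, Matrix.smul_mul, hG]
  rw [hconj, Matrix.mul_smul, Matrix.smul_mul, hB, hE,
    mulBG_aux n hn f, mulAE_aux n hn f, hD]
  ext a b
  by_cases hab : a = b
  · simp only [Matrix.smul_apply, Matrix.diagonal_apply, hab, if_true, smul_eq_mul]
    rw [zpow_sub₀ hf0]
    have h1 : ((2 * (b : ℕ) : ℤ)) = ((2 * (b : ℕ) : ℕ) : ℤ) := by push_cast; ring
    rw [h1, zpow_natCast, zpow_natCast, div_eq_mul_inv]
    ring
  · simp [Matrix.diagonal_apply, hab]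
end
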